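/- The sequences of associated polynomials of the first kind satisfy the shifted three-term recurrence relations: under the stated orthogonality setup, for every m ≥ 1 and all z ∈ ℂ, z·B^{(1)}_{m-1}(z) = A_m B^{(1)}_m(z) + B_m B^{(1)}_{m-1}(z) + C_m B^{(1)}_{m-2}(z) and z·G^{(1)}_{m-1}(z) = G^{(1)}_{m-2}(z) A_{m-1} + G^{(1)}_{m-1}(z) B_m + G^{(1)}_m(z) C_{m+1}, with B^{(1)}_{-1} = 0, B^{(1)}_0(z) = A_0^{-1} U(P_0), G^{(1)}_{-1} = 0, and G^{(1)}_0(z) = U(P_0) G_0 C_1^{-1}. -/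

import Mathlib

open Polynomial Matrix Finset

noncomputable section

/-- `N × N` matrices with polynomial entries, viewed as matrix polynomials. -/
abbrev MatPoly (N : ℕ) := Matrix (Fin N) (Fin N) (Polynomial ℂ)

/-- Evaluation of a matrix polynomial at a complex number (entrywise evaluation). -/
def evalM {N : ℕ} (Q : MatPoly N) (z : ℂ) : Matrix (Fin N) (Fin N) ℂ :=
  Q.map (Polynomial.eval z)

/-- Composition of a matrix polynomial with a scalar polynomial `h` (entrywise). -/
def compH {N : ℕ} (Q : MatPoly N) (h : Polynomial ℂ) : MatPoly N :=
  Q.map fun p => p.comp h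

/-- The vector polynomial `P₀(x) = [1, x, …, x^{N-1}]ᵀ`. -/
def P0 (N : ℕ) : Fin N → Polynomial ℂ := fun i => Polynomial.X ^ (i : ℕ)

/-- Action of a vector of linear functionals `U` on a vector polynomial `P`:
the matrix with `(i,j)` entry `u^j(p_i)`. -/
def applyU {N : ℕ} (U : Fin N → (Polynomial ℂ →ₗ[ℂ] ℂ)) (P : Fin N → Polynomial ℂ) :
    Matrix (Fin N) (Fin N) ℂ := Matrix.of fun i j => U j (P i)

/-- The vector polynomial `B(x) = V(h(x)) P₀(x)` associated to a matrix polynomial `V`. -/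
def Bvec {N : ℕ} (V : MatPoly N) (h : Polynomial ℂ) : Fin N → Polynomial ℂ :=
  (compH V h).mulVec (P0 N)

/-- `((Qᵀ U)(P))_{i,j} = Σ_s u^s (Q_{s,j} p_i)`. -/
def transApply {N : ℕ} (U : Fin N → (Polynomial ℂ →ₗ[ℂ] ℂ)) (Q : MatPoly N)
    (P : Fin N → Polynomial ℂ) : Matrix (Fin N) (Fin N) ℂ :=
  Matrix.of fun i j => ∑ s, U s (Q s j * P i)

/-- The difference quotient `(p(z) - p(h(x)))/(z - h(x))` as a polynomial in the outer
variable `z` with coefficients polynomials in the inner variable `x`. -/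
def diffQuot (p h : Polynomial ℂ) : Polynomial (Polynomial ℂ) :=
  (p.map (Polynomial.C : ℂ →+* Polynomial ℂ) - Polynomial.C (p.comp h)) /ₘ
    (Polynomial.X - Polynomial.C h)

/-- Apply a linear functional to the (inner-variable) coefficients of a two-variable
polynomial, leaving a polynomial in the outer variable. -/
def applyCoeff (u : Polynomial ℂ →ₗ[ℂ] ℂ) (q : Polynomial (Polynomial ℂ)) : Polynomial ℂ :=
  q.sum fun n a => Polynomial.monomial n (u a)

/-- The first kind associated polynomial built from `W = V_{m+1}`:
`B⁽¹⁾_m(z) = U_x( ((W(z) - W(h(x)))/(z - h(x))) · P₀(x) )`. -/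
def assocB {N : ℕ} (U : Fin N → (Polynomial ℂ →ₗ[ℂ] ℂ)) (W : MatPoly N) (h : Polynomial ℂ) :
    MatPoly N :=
  Matrix.of fun i j =>
    applyCoeff (U j) (∑ s, diffQuot (W i s) h * Polynomial.C (Polynomial.X ^ (s : ℕ)))

/-- The first kind associated polynomial built from `W = G_{m+1}`:
`G⁽¹⁾_m(z) = ( ((W(z) - W(h(x)))ᵀ/(z - h(x))) U_x )(P₀(x))`. -/
def assocG {N : ℕ} (U : Fin N → (Polynomial ℂ →ₗ[ℂ] ℂ)) (W : MatPoly N) (h : Polynomial ℂ) :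
    MatPoly N :=
  Matrix.of fun i j =>
    ∑ s, applyCoeff (U s) (diffQuot (W s j) h * Polynomial.C (Polynomial.X ^ (i : ℕ)))

/-- The shifted sequence of first kind associated polynomials: `B1seq U V h k = B⁽¹⁾_{k-1}`,
with the convention `B⁽¹⁾_{-1} = 0`. -/
def B1seq {N : ℕ} (U : Fin N → (Polynomial ℂ →ₗ[ℂ] ℂ)) (V : ℕ → MatPoly N)
    (h : Polynomial ℂ) : ℕ → MatPoly N :=
  fun k => if k = 0 then 0 else assocB U (V k) h

/-- The shifted sequence `G1seq U G h k = G⁽¹⁾_{k-1}`, with `G⁽¹⁾_{-1} = 0`. -/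
def G1seq {N : ℕ} (U : Fin N → (Polynomial ℂ →ₗ[ℂ] ℂ)) (G : ℕ → MatPoly N)
    (h : Polynomial ℂ) : ℕ → MatPoly N :=
  fun k => if k = 0 then 0 else assocG U (G k) h

/-!
The difference quotient `Δp = (p(z) - p(h(x)))/(z - h(x))` is linear in `p` and satisfies
`Δ(z p) = z Δp + p(h(x))`. Applying `U_x(Δ(·) P₀)` entrywise to the recurrence
`z V_{m+1} = A V_{m+2} + B V_{m+1} + C V_m` therefore yields the same recurrence for the
associated polynomials, up to the extra term `U(V_{m+1}(h) P₀) = U(B_{m+1})`, which vanishes by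
left-orthogonality with `k = 0`; the right-orthogonality of `G_{m+1}` plays the same role for
`G⁽¹⁾`. Since `V₀ = I` and `G₀` are constant, their difference quotients vanish, and the
recurrences at `m = 0` reduce to `A₀ B⁽¹⁾₀ = U(P₀)` and `G⁽¹⁾₀ C₁ = U(P₀) G₀`.
-/

section DiffQuot

lemma X_sub_C_mul_diffQuot (p h : ℂ[X]) :
    (X - C h) * diffQuot p h = p.map C - C (p.comp h) := by
  have hdvd : (p.map C - C (p.comp h)) %ₘ (X - C h) = 0 := by
    rw [modByMonic_X_sub_C_eq_C_eval]
    simp [eval_map, Polynomial.comp]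
  have := modByMonic_add_div (p.map C - C (p.comp h)) (X - C h)
  rwa [hdvd, zero_add] at this

lemma diffQuot_eq_of_X_sub_C_mul_eq {p h : ℂ[X]} {q : ℂ[X][X]}
    (hq : (X - C h) * q = p.map C - C (p.comp h)) : diffQuot p h = q :=
  mul_left_cancel₀ (monic_X_sub_C h).ne_zero ((X_sub_C_mul_diffQuot p h).trans hq.symm)

lemma diffQuot_C (a : ℂ) (h : ℂ[X]) : diffQuot (C a) h = 0 :=
  diffQuot_eq_of_X_sub_C_mul_eq (by simp)

lemma diffQuot_X_mul (p h : ℂ[X]) :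
    diffQuot (X * p) h = X * diffQuot p h + C (p.comp h) := by
  apply diffQuot_eq_of_X_sub_C_mul_eq
  rw [mul_add, mul_left_comm, X_sub_C_mul_diffQuot]
  simp only [Polynomial.map_mul, map_X, mul_comp, X_comp, map_mul]
  ring

def diffQuotLinearMap (h : ℂ[X]) : ℂ[X] →ₗ[ℂ] ℂ[X][X] where
  toFun p := diffQuot p h
  map_add' p q := diffQuot_eq_of_X_sub_C_mul_eq <| by
    rw [mul_add, X_sub_C_mul_diffQuot, X_sub_C_mul_diffQuot, Polynomial.map_add, add_comp,
      map_add]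
    ring
  map_smul' a p := diffQuot_eq_of_X_sub_C_mul_eq <| by
    rw [RingHom.id_apply, mul_smul_comm, X_sub_C_mul_diffQuot]
    simp only [smul_sub, smul_C, Polynomial.map_smul, smul_comp, sub_left_inj]
    exact (algebraMap_smul ℂ[X] a _).symm

end DiffQuot

section ApplyCoeff

def applyCoeffLinearMap (u : ℂ[X] →ₗ[ℂ] ℂ) : ℂ[X][X] →ₗ[ℂ] ℂ[X] :=
  lsum fun n => monomial n ∘ₗ u

lemma applyCoeffLinearMap_apply (u : ℂ[X] →ₗ[ℂ] ℂ) (q : ℂ[X][X]) :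
    applyCoeffLinearMap u q = applyCoeff u q := rfl

lemma coeff_applyCoeff (u : ℂ[X] →ₗ[ℂ] ℂ) (q : ℂ[X][X]) (n : ℕ) :
    (applyCoeff u q).coeff n = u (q.coeff n) := by
  simp only [applyCoeff, Polynomial.sum, finsetSum_coeff, coeff_monomial, Finset.sum_ite_eq',
    mem_support_iff, ne_eq, ite_not]
  split_ifs with hn <;> simp [hn]

lemma applyCoeff_C (u : ℂ[X] →ₗ[ℂ] ℂ) (b : ℂ[X]) : applyCoeff u (C b) = C (u b) := by
  ext (_ | n) <;> simp [coeff_applyCoeff]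

lemma applyCoeff_X_mul (u : ℂ[X] →ₗ[ℂ] ℂ) (q : ℂ[X][X]) :
    applyCoeff u (X * q) = X * applyCoeff u q := by
  ext (_ | n) <;> simp [coeff_applyCoeff]

end ApplyCoeff

section AssocEntry

/-- `p ↦ U_x(((p(z) - p(h(x)))/(z - h(x))) · x^k)`. -/
def assocEntry (u : ℂ[X] →ₗ[ℂ] ℂ) (h : ℂ[X]) (k : ℕ) : ℂ[X] →ₗ[ℂ] ℂ[X] :=
  applyCoeffLinearMap u ∘ₗ LinearMap.mulRight ℂ (C (X ^ k)) ∘ₗ diffQuotLinearMap h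

lemma assocEntry_apply (u : ℂ[X] →ₗ[ℂ] ℂ) (h : ℂ[X]) (k : ℕ) (p : ℂ[X]) :
    assocEntry u h k p = applyCoeff u (diffQuot p h * C (X ^ k)) := rfl

lemma assocEntry_C (u : ℂ[X] →ₗ[ℂ] ℂ) (h : ℂ[X]) (k : ℕ) (a : ℂ) :
    assocEntry u h k (C a) = 0 := by
  simp [assocEntry_apply, diffQuot_C, ← applyCoeffLinearMap_apply]

lemma assocEntry_X_mul (u : ℂ[X] →ₗ[ℂ] ℂ) (h : ℂ[X]) (k : ℕ) (p : ℂ[X]) :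
    assocEntry u h k (X * p) = X * assocEntry u h k p + C (u (p.comp h * X ^ k)) := by
  rw [assocEntry_apply, assocEntry_apply, diffQuot_X_mul, add_mul, ← applyCoeffLinearMap_apply,
    map_add, applyCoeffLinearMap_apply, applyCoeffLinearMap_apply, mul_assoc, applyCoeff_X_mul,
    ← map_mul, applyCoeff_C]

end AssocEntry

section Assoc

variable {N : ℕ} (U : Fin N → (ℂ[X] →ₗ[ℂ] ℂ)) (h : ℂ[X])

lemma assocB_apply (W : MatPoly N) (i j : Fin N) :
    assocB U W h i j = ∑ s : Fin N, assocEntry (U j) h s (W i s) := by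
  rw [assocB, of_apply, ← applyCoeffLinearMap_apply, map_sum]
  rfl

lemma assocB_add (W W' : MatPoly N) :
    assocB U (W + W') h = assocB U W h + assocB U W' h := by
  ext i j : 1
  simp [assocB_apply, Finset.sum_add_distrib]

lemma assocB_map_C_mul (c : Matrix (Fin N) (Fin N) ℂ) (W : MatPoly N) :
    assocB U (c.map C * W) h = c.map C * assocB U W h := by
  ext i j : 1
  simp only [assocB_apply, mul_apply, map_apply, ← smul_eq_C_mul, map_sum, map_smul,
    Finset.smul_sum]
  exact Finset.sum_comm

lemma assocB_X_smul (W : MatPoly N) :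
    assocB U ((X : ℂ[X]) • W) h = (X : ℂ[X]) • assocB U W h + (applyU U (Bvec W h)).map C := by
  ext i j : 1
  simp [assocB_apply, assocEntry_X_mul, Finset.sum_add_distrib, Finset.mul_sum, applyU, Bvec,
    compH, mulVec, dotProduct, P0]

lemma assocB_map_C (c : Matrix (Fin N) (Fin N) ℂ) : assocB U (c.map C) h = 0 := by
  ext i j : 1
  simp [assocB_apply, assocEntry_C]

lemma assocG_apply (W : MatPoly N) (i j : Fin N) :
    assocG U W h i j = ∑ s, assocEntry (U s) h i (W s j) := rfl

lemma assocG_add (W W' : MatPoly N) :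
    assocG U (W + W') h = assocG U W h + assocG U W' h := by
  ext i j : 1
  simp [assocG_apply, Finset.sum_add_distrib]

lemma assocG_mul_map_C (W : MatPoly N) (c : Matrix (Fin N) (Fin N) ℂ) :
    assocG U (W * c.map C) h = assocG U W h * c.map C := by
  ext i j : 1
  simp only [assocG_apply, mul_apply, map_apply, mul_comm _ (C _), ← smul_eq_C_mul, map_sum,
    map_smul, Finset.smul_sum]
  exact Finset.sum_comm

lemma assocG_X_smul (W : MatPoly N) :
    assocG U ((X : ℂ[X]) • W) h =
      (X : ℂ[X]) • assocG U W h + (transApply U (compH W h) (P0 N)).map C := by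
  ext i j : 1
  simp [assocG_apply, assocEntry_X_mul, Finset.sum_add_distrib, Finset.mul_sum, transApply,
    compH, P0]

lemma assocG_map_C (c : Matrix (Fin N) (Fin N) ℂ) : assocG U (c.map C) h = 0 := by
  ext i j : 1
  simp [assocG_apply, assocEntry_C]

lemma assocB_one : assocB U (1 : MatPoly N) h = 0 := by
  simpa using assocB_map_C U h 1

end Assoc

section Eval

variable {N : ℕ}

@[simp] lemma evalM_add (P Q : MatPoly N) (z : ℂ) : evalM (P + Q) z = evalM P z + evalM Q z :=
  Matrix.map_add _ (fun _ _ => eval_add) P Q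

@[simp] lemma evalM_mul (P Q : MatPoly N) (z : ℂ) : evalM (P * Q) z = evalM P z * evalM Q z :=
  Matrix.map_mul (f := evalRingHom z)

@[simp] lemma evalM_one (z : ℂ) : evalM (1 : MatPoly N) z = 1 :=
  Matrix.map_one _ (eval_zero) (eval_one)

@[simp] lemma evalM_map_C (c : Matrix (Fin N) (Fin N) ℂ) (z : ℂ) : evalM (c.map C) z = c := by
  ext i j; simp [evalM]

@[simp] lemma evalM_X_smul (P : MatPoly N) (z : ℂ) :
    evalM ((X : ℂ[X]) • P) z = z • evalM P z := by
  ext i j; simp [evalM]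

lemma X_smul_eq_iff_forall_evalM {P Q : MatPoly N} :
    (X : ℂ[X]) • P = Q ↔ ∀ z : ℂ, z • evalM P z = evalM Q z := by
  refine ⟨by rintro rfl z; simp, fun hPQ => ?_⟩
  ext i j : 1
  refine Polynomial.funext fun z => ?_
  simpa [evalM] using congrFun (congrFun (hPQ z) i) j

end Eval

section Recurrence

variable {N : ℕ} (U : Fin N → (ℂ[X] →ₗ[ℂ] ℂ)) (h : ℂ[X])

lemma assocB_recurrence {W W₁ W₂ W₃ : MatPoly N} {a b c : Matrix (Fin N) (Fin N) ℂ}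
    (hrec : ∀ z : ℂ, z • evalM W z = a * evalM W₁ z + b * evalM W₂ z + c * evalM W₃ z)
    (horth : applyU U (Bvec W h) = 0) (z : ℂ) :
    z • evalM (assocB U W h) z = a * evalM (assocB U W₁ h) z + b * evalM (assocB U W₂ h) z
      + c * evalM (assocB U W₃ h) z := by
  have hpoly : (X : ℂ[X]) • W = a.map C * W₁ + b.map C * W₂ + c.map C * W₃ :=
    X_smul_eq_iff_forall_evalM.2 fun z => by simpa using hrec z
  have hassoc := assocB_X_smul U h W
  rw [horth, Matrix.map_zero _ C.map_zero, add_zero, hpoly, assocB_add, assocB_add,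
    assocB_map_C_mul, assocB_map_C_mul, assocB_map_C_mul] at hassoc
  simpa using X_smul_eq_iff_forall_evalM.1 hassoc.symm z

lemma assocG_recurrence {W W₁ W₂ W₃ : MatPoly N} {a b c : Matrix (Fin N) (Fin N) ℂ}
    (hrec : ∀ z : ℂ, z • evalM W z = evalM W₁ z * a + evalM W₂ z * b + evalM W₃ z * c)
    (horth : transApply U (compH W h) (P0 N) = 0) (z : ℂ) :
    z • evalM (assocG U W h) z = evalM (assocG U W₁ h) z * a + evalM (assocG U W₂ h) z * b
      + evalM (assocG U W₃ h) z * c := by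
  have hpoly : (X : ℂ[X]) • W = W₁ * a.map C + W₂ * b.map C + W₃ * c.map C :=
    X_smul_eq_iff_forall_evalM.2 fun z => by simpa using hrec z
  have hassoc := assocG_X_smul U h W
  rw [horth, Matrix.map_zero _ C.map_zero, add_zero, hpoly, assocG_add, assocG_add,
    assocG_mul_map_C, assocG_mul_map_C, assocG_mul_map_C] at hassoc
  simpa using X_smul_eq_iff_forall_evalM.1 hassoc.symm z

lemma Bvec_one : Bvec (1 : MatPoly N) h = P0 N := by
  simp [Bvec, compH, Matrix.map_one (fun p : ℂ[X] => p.comp h) zero_comp one_comp]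

lemma transApply_compH_map_C (g : Matrix (Fin N) (Fin N) ℂ) :
    transApply U (compH (g.map C) h) (P0 N) = applyU U (P0 N) * g := by
  ext i j
  simp only [transApply, compH, applyU, map_apply, C_comp, of_apply, mul_apply]
  refine Finset.sum_congr rfl fun s _ => ?_
  rw [← smul_eq_C_mul, map_smul, smul_eq_mul, mul_comm]

lemma assocB_eq_of_initial {W₁ : MatPoly N} {a b : Matrix (Fin N) (Fin N) ℂ} (ha : IsUnit a)
    (hrec : ∀ z : ℂ, z • evalM 1 z = a * evalM W₁ z + b * evalM 1 z) :
    assocB U W₁ h = (a⁻¹ * applyU U (P0 N)).map C := by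
  have hpoly : (X : ℂ[X]) • 1 = a.map C * W₁ + b.map C * 1 :=
    X_smul_eq_iff_forall_evalM.2 fun z => by simpa using hrec z
  have hassoc := assocB_X_smul U h 1
  rw [hpoly, assocB_add, assocB_map_C_mul, assocB_map_C_mul, Bvec_one, assocB_one, mul_zero,
    add_zero, smul_zero, zero_add] at hassoc
  have hinv : (a⁻¹).map C * a.map C = (1 : MatPoly N) := by
    rw [← Matrix.map_mul, nonsing_inv_mul a ((isUnit_iff_isUnit_det a).1 ha)]
    simp
  calc assocB U W₁ h = (a⁻¹).map C * (a.map C * assocB U W₁ h) := by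
        rw [← Matrix.mul_assoc, hinv, Matrix.one_mul]
    _ = (a⁻¹ * applyU U (P0 N)).map C := by rw [hassoc, Matrix.map_mul]

lemma assocG_eq_of_initial {W₁ : MatPoly N} {g b c : Matrix (Fin N) (Fin N) ℂ} (hc : IsUnit c)
    (hrec : ∀ z : ℂ, z • evalM (g.map C) z = evalM (g.map C) z * b + evalM W₁ z * c) :
    assocG U W₁ h = (applyU U (P0 N) * g * c⁻¹).map C := by
  have hpoly : (X : ℂ[X]) • g.map C = g.map C * b.map C + W₁ * c.map C :=
    X_smul_eq_iff_forall_evalM.2 fun z => by simpa using hrec z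
  have hassoc := assocG_X_smul U h (g.map C)
  rw [hpoly, assocG_add, assocG_mul_map_C, assocG_mul_map_C, assocG_map_C, zero_mul, zero_add,
    smul_zero, zero_add, transApply_compH_map_C] at hassoc
  have hinv : c.map C * (c⁻¹).map C = (1 : MatPoly N) := by
    rw [← Matrix.map_mul, mul_nonsing_inv c ((isUnit_iff_isUnit_det c).1 hc)]
    simp
  calc assocG U W₁ h = assocG U W₁ h * c.map C * (c⁻¹).map C := by
        rw [Matrix.mul_assoc, hinv, Matrix.mul_one]
    _ = (applyU U (P0 N) * g * c⁻¹).map C := by rw [hassoc, ← Matrix.map_mul]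

end Recurrence

theorem assoc_first_kind_recurrence_general
    (N : ℕ)
    (U : Fin N → (Polynomial ℂ →ₗ[ℂ] ℂ))
    (h : Polynomial ℂ)
    (A B C : ℕ → Matrix (Fin N) (Fin N) ℂ)
    (hA : ∀ m, IsUnit (A m)) (hC : ∀ m, IsUnit (C m))
    (V G : ℕ → MatPoly N)
    (hV0I : V 0 = 1)
    (g0 : Matrix (Fin N) (Fin N) ℂ)
    (hG0c : G 0 = g0.map fun a => Polynomial.C a)
    (hVrec0 : ∀ z : ℂ, z • evalM (V 0) z = A 0 * evalM (V 1) z + B 0 * evalM (V 0) z)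
    (hVrec : ∀ (m : ℕ) (z : ℂ), z • evalM (V (m + 1)) z =
      A (m + 1) * evalM (V (m + 2)) z + B (m + 1) * evalM (V (m + 1)) z +
        C (m + 1) * evalM (V m) z)
    (hGrec0 : ∀ z : ℂ, z • evalM (G 0) z = evalM (G 0) z * B 0 + evalM (G 1) z * C 1)
    (hGrec : ∀ (m : ℕ) (z : ℂ), z • evalM (G (m + 1)) z =
      evalM (G m) z * A m + evalM (G (m + 1)) z * B (m + 1) +
        evalM (G (m + 2)) z * C (m + 2))
    (hleft : ∀ m, ∀ k < m, applyU U (fun i => h ^ k * Bvec (V m) h i) = 0)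
    (hright : ∀ m, ∀ j < m,
      transApply U (compH (G m) h) (fun i => h ^ j * P0 N i) = 0) :
    (∀ (n : ℕ) (z : ℂ), z • evalM (B1seq U V h (n + 1)) z =
        A (n + 1) * evalM (B1seq U V h (n + 2)) z
          + B (n + 1) * evalM (B1seq U V h (n + 1)) z
          + C (n + 1) * evalM (B1seq U V h n) z)
    ∧ (∀ (n : ℕ) (z : ℂ), z • evalM (G1seq U G h (n + 1)) z =
        evalM (G1seq U G h n) z * A n
          + evalM (G1seq U G h (n + 1)) z * B (n + 1)
          + evalM (G1seq U G h (n + 2)) z * C (n + 2))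
    ∧ B1seq U V h 1 = ((A 0)⁻¹ * applyU U (P0 N)).map (fun a => Polynomial.C a)
    ∧ G1seq U G h 1 = (applyU U (P0 N) * g0 * (C 1)⁻¹).map (fun a => Polynomial.C a) := by
  have hB1 : ∀ k, B1seq U V h k = assocB U (V k) h := by
    rintro (_ | k) <;> simp [B1seq, hV0I, assocB_one]
  have hG1 : ∀ k, G1seq U G h k = assocG U (G k) h := by
    rintro (_ | k) <;> simp [G1seq, hG0c, assocG_map_C]
  simp only [hB1, hG1]
  refine ⟨fun n => assocB_recurrence U h (hVrec n) ?_,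
    fun n => assocG_recurrence U h (hGrec n) ?_,
    assocB_eq_of_initial U h (hA 0) (hV0I ▸ hVrec0),
    assocG_eq_of_initial U h (hC 1) (hG0c ▸ hGrec0)⟩
  · simpa using hleft (n + 1) 0 n.succ_pos
  · simpa using hright (n + 1) 0 n.succ_pos

/-- **Shifted three-term recurrences for the associated polynomials of the first kind.**
Under the orthogonality setup for the vector of linear functionals `U`, the sequences
`B⁽¹⁾` and `G⁽¹⁾` satisfy (for `m ≥ 1`, with `B⁽¹⁾_{-1} = G⁽¹⁾_{-1} = 0`)
`z B⁽¹⁾_{m-1}(z) = A_m B⁽¹⁾_m(z) + B_m B⁽¹⁾_{m-1}(z) + C_m B⁽¹⁾_{m-2}(z)` and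
`z G⁽¹⁾_{m-1}(z) = G⁽¹⁾_{m-2}(z) A_{m-1} + G⁽¹⁾_{m-1}(z) B_m + G⁽¹⁾_m(z) C_{m+1}`,
with `B⁽¹⁾_0 = A₀⁻¹ U(P₀)` and `G⁽¹⁾_0 = U(P₀) G₀ C₁⁻¹`. -/
theorem assoc_first_kind_recurrence
    (N : ℕ) (hN : 1 ≤ N)
    (U : Fin N → (Polynomial ℂ →ₗ[ℂ] ℂ))
    (h : Polynomial ℂ) (hdeg : h.natDegree = N)
    (A B C : ℕ → Matrix (Fin N) (Fin N) ℂ)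
    (hA : ∀ m, IsUnit (A m)) (hC : ∀ m, IsUnit (C m))
    (V G : ℕ → MatPoly N)
    (hV0I : V 0 = 1)
    (g0 : Matrix (Fin N) (Fin N) ℂ) (hg0 : IsUnit g0)
    (hG0c : G 0 = g0.map fun a => Polynomial.C a)
    (hVrec0 : ∀ z : ℂ, z • evalM (V 0) z = A 0 * evalM (V 1) z + B 0 * evalM (V 0) z)
    (hVrec : ∀ (m : ℕ) (z : ℂ), z • evalM (V (m + 1)) z =
      A (m + 1) * evalM (V (m + 2)) z + B (m + 1) * evalM (V (m + 1)) z +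
        C (m + 1) * evalM (V m) z)
    (hGrec0 : ∀ z : ℂ, z • evalM (G 0) z = evalM (G 0) z * B 0 + evalM (G 1) z * C 1)
    (hGrec : ∀ (m : ℕ) (z : ℂ), z • evalM (G (m + 1)) z =
      evalM (G m) z * A m + evalM (G (m + 1)) z * B (m + 1) +
        evalM (G (m + 2)) z * C (m + 2))
    (hleft : ∀ m, ∀ k < m, applyU U (fun i => h ^ k * Bvec (V m) h i) = 0)
    (hright : ∀ m, ∀ j < m,
      transApply U (compH (G m) h) (fun i => h ^ j * P0 N i) = 0) :
    (∀ (n : ℕ) (z : ℂ), z • evalM (B1seq U V h (n + 1)) z =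
        A (n + 1) * evalM (B1seq U V h (n + 2)) z
          + B (n + 1) * evalM (B1seq U V h (n + 1)) z
          + C (n + 1) * evalM (B1seq U V h n) z)
    ∧ (∀ (n : ℕ) (z : ℂ), z • evalM (G1seq U G h (n + 1)) z =
        evalM (G1seq U G h n) z * A n
          + evalM (G1seq U G h (n + 1)) z * B (n + 1)
          + evalM (G1seq U G h (n + 2)) z * C (n + 2))
    ∧ B1seq U V h 1 = ((A 0)⁻¹ * applyU U (P0 N)).map (fun a => Polynomial.C a)
    ∧ G1seq U G h 1 = (applyU U (P0 N) * g0 * (C 1)⁻¹).map (fun a => Polynomial.C a) :=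
  assoc_first_kind_recurrence_general N U h A B C hA hC V G hV0I g0 hG0c hVrec0 hVrec hGrec0 hGrec
    hleft hright
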